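/- arXiv:1006.4251 — 3 statements merged into one kernel-verified Lean document; each statement's English description precedes it below -/
import Mathlib

section
/- Let ⟨A, Δ⟩ be a Jordan coalgebra over a field k of characteristic not 2, with dual algebra A*. Then the linear space WIntDer(A*) of weakly inner derivations of A* is closed under the commutator [d₁, d₂] = d₁d₂ − d₂d₁; that is, WIntDer(A*) is a subalgebra of the Lie algebra Der(A*) of all derivations of A* under commutation. -/
open TensorProduct

variable {k : Type*} [Field k] {A : Type*} [AddCommGroup A] [Module k A]

/-- The multiplication on the dual space `A*` induced by a comultiplication `Δ`:
`⟨fg, a⟩ = Σ ⟨f, a₍₁₎⟩⟨g, a₍₂₎⟩`. -/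
noncomputable def dmul (Δ : A →ₗ[k] A ⊗[k] A) (f g : (A →ₗ[k] k)) : (A →ₗ[k] k) :=
  (TensorProduct.lid k k).toLinearMap ∘ₗ TensorProduct.map f g ∘ₗ Δ

/-- The left action `f·a = Σ a₍₁₎ ⟨f, a₍₂₎⟩` of the dual algebra on `A`. -/
noncomputable def lact (Δ : A →ₗ[k] A ⊗[k] A) (f : (A →ₗ[k] k)) : A →ₗ[k] A :=
  (TensorProduct.rid k A).toLinearMap ∘ₗ TensorProduct.map LinearMap.id f ∘ₗ Δ

/-- The right action `a·f = Σ ⟨f, a₍₁₎⟩ a₍₂₎` of the dual algebra on `A`. -/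
noncomputable def ract (Δ : A →ₗ[k] A ⊗[k] A) (f : (A →ₗ[k] k)) : A →ₗ[k] A :=
  (TensorProduct.lid k A).toLinearMap ∘ₗ TensorProduct.map f LinearMap.id ∘ₗ Δ

/-- `⟨A, Δ⟩` is a Jordan coalgebra: its dual algebra is commutative and satisfies
the Jordan identity `((ff)g)f = (ff)(gf)`. -/
def IsJordanCoalgebra (Δ : A →ₗ[k] A ⊗[k] A) : Prop :=
  (∀ f g : (A →ₗ[k] k), dmul Δ f g = dmul Δ g f) ∧
  (∀ f g : (A →ₗ[k] k),
    dmul Δ (dmul Δ (dmul Δ f f) g) f = dmul Δ (dmul Δ f f) (dmul Δ g f))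

/-- `B` is a subcoalgebra: `Δ(B) ⊆ B ⊗ B`. -/
def IsSubcoalgebra (Δ : A →ₗ[k] A ⊗[k] A) (B : Submodule k A) : Prop :=
  ∀ b ∈ B, Δ b ∈ LinearMap.range (TensorProduct.map B.subtype B.subtype)

/-- `B` is a coideal: `Δ(B) ⊆ B ⊗ A + A ⊗ B`. -/
def IsCoideal (Δ : A →ₗ[k] A ⊗[k] A) (B : Submodule k A) : Prop :=
  ∀ b ∈ B, Δ b ∈
    LinearMap.range (TensorProduct.map B.subtype (LinearMap.id (R := k) (M := A))) ⊔
    LinearMap.range (TensorProduct.map (LinearMap.id (R := k) (M := A)) B.subtype)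

/-- A derivation of the dual algebra `A*`. -/
def IsDerivation (Δ : A →ₗ[k] A ⊗[k] A)
    (d : (A →ₗ[k] k) →ₗ[k] (A →ₗ[k] k)) : Prop :=
  ∀ f g : (A →ₗ[k] k), d (dmul Δ f g) = dmul Δ (d f) g + dmul Δ f (d g)

theorem dmul_add_left (Δ : A →ₗ[k] A ⊗[k] A) (f₁ f₂ g : (A →ₗ[k] k)) :
    dmul Δ (f₁ + f₂) g = dmul Δ f₁ g + dmul Δ f₂ g := by
  unfold dmul; rw [TensorProduct.map_add_left]; ext a; simp

theorem dmul_add_right (Δ : A →ₗ[k] A ⊗[k] A) (f g₁ g₂ : (A →ₗ[k] k)) :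
    dmul Δ f (g₁ + g₂) = dmul Δ f g₁ + dmul Δ f g₂ := by
  unfold dmul; rw [TensorProduct.map_add_right]; ext a; simp

theorem dmul_smul_left (Δ : A →ₗ[k] A ⊗[k] A) (c : k) (f g : (A →ₗ[k] k)) :
    dmul Δ (c • f) g = c • dmul Δ f g := by
  unfold dmul; rw [TensorProduct.map_smul_left]; ext a; simp

theorem dmul_smul_right (Δ : A →ₗ[k] A ⊗[k] A) (c : k) (f g : (A →ₗ[k] k)) :
    dmul Δ f (c • g) = c • dmul Δ f g := by
  unfold dmul; rw [TensorProduct.map_smul_right]; ext a; simp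

theorem dmul_zero_left (Δ : A →ₗ[k] A ⊗[k] A) (g : (A →ₗ[k] k)) :
    dmul Δ (0 : (A →ₗ[k] k)) g = 0 := by
  ext a; simp [dmul]

theorem dmul_zero_right (Δ : A →ₗ[k] A ⊗[k] A) (f : (A →ₗ[k] k)) :
    dmul Δ f (0 : (A →ₗ[k] k)) = 0 := by
  ext a; simp [dmul]

/-- The operator of right multiplication `f' : g ↦ gf` on the dual algebra. -/
noncomputable def Rop (Δ : A →ₗ[k] A ⊗[k] A) (f : (A →ₗ[k] k)) :
    (A →ₗ[k] k) →ₗ[k] (A →ₗ[k] k) where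
  toFun g := dmul Δ g f
  map_add' g₁ g₂ := dmul_add_left Δ g₁ g₂ f
  map_smul' c g := dmul_smul_left Δ c g f

/-- The inner derivation `[f,g] = f'g' - g'f'` (in right-operator convention,
`x[f,g] = (xf)g - (xg)f`). -/
noncomputable def commD (Δ : A →ₗ[k] A ⊗[k] A) (f g : (A →ₗ[k] k)) :
    (A →ₗ[k] k) →ₗ[k] (A →ₗ[k] k) :=
  Rop Δ g ∘ₗ Rop Δ f - Rop Δ f ∘ₗ Rop Δ g

/-- The space of inner derivations of the dual algebra. -/
noncomputable def IntDer (Δ : A →ₗ[k] A ⊗[k] A) :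
    Submodule k ((A →ₗ[k] k) →ₗ[k] (A →ₗ[k] k)) :=
  Submodule.span k {d | ∃ f g : (A →ₗ[k] k), d = commD Δ f g}

/-- A weakly inner derivation of the dual algebra: a derivation that agrees with some
inner derivation on every finite-dimensional subcoalgebra. -/
def IsWIntDer (Δ : A →ₗ[k] A ⊗[k] A)
    (d : (A →ₗ[k] k) →ₗ[k] (A →ₗ[k] k)) : Prop :=
  IsDerivation Δ d ∧
  ∀ B : Submodule k A, IsSubcoalgebra Δ B → FiniteDimensional k B →
    ∃ i ∈ IntDer Δ, ∀ f : (A →ₗ[k] k), ∀ b ∈ B, d f b = i f b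

/-- The space of weakly inner derivations, as a submodule of `End(A*)`. -/
noncomputable def WIntDer (Δ : A →ₗ[k] A ⊗[k] A) :
    Submodule k ((A →ₗ[k] k) →ₗ[k] (A →ₗ[k] k)) where
  carrier := {d | IsWIntDer Δ d}
  zero_mem' := by
    refine ⟨fun f g => by simp [dmul_zero_left, dmul_zero_right],
      fun B hB hfin => ⟨0, Submodule.zero_mem _, fun f b hb => by simp⟩⟩
  add_mem' := by
    rintro d₁ d₂ ⟨hd₁, hw₁⟩ ⟨hd₂, hw₂⟩
    refine ⟨fun f g => ?_, fun B hB hfin => ?_⟩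
    · simp only [LinearMap.add_apply, hd₁ f g, hd₂ f g, dmul_add_left, dmul_add_right]
      abel
    · obtain ⟨i₁, hi₁, he₁⟩ := hw₁ B hB hfin
      obtain ⟨i₂, hi₂, he₂⟩ := hw₂ B hB hfin
      exact ⟨i₁ + i₂, Submodule.add_mem _ hi₁ hi₂, fun f b hb => by
        simp [LinearMap.add_apply, he₁ f b hb, he₂ f b hb]⟩
  smul_mem' := by
    rintro c d ⟨hd, hw⟩
    refine ⟨fun f g => ?_, fun B hB hfin => ?_⟩
    · simp only [LinearMap.smul_apply, hd f g, dmul_smul_left, dmul_smul_right, smul_add]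
    · obtain ⟨i, hi, he⟩ := hw B hB hfin
      exact ⟨c • i, Submodule.smul_mem _ c hi, fun f b hb => by
        simp [LinearMap.smul_apply, he f b hb]⟩

/-! Let `d₁, d₂` agree with inner derivations `i₁, i₂` on a finite-dimensional subcoalgebra `B`.
Since `B⊥` is an ideal of `A*`, every inner derivation maps `B⊥` into itself, and so does `d₂`,
which agrees with `i₂` on `B`. Hence `[d₁, d₂]` agrees on `B` with `[i₁, d₂]`, which is inner
because `[[u, v], D] = [uD, v] + [u, vD]` for every derivation `D`. -/

theorem dmul_sub_left (Δ : A →ₗ[k] A ⊗[k] A) (f₁ f₂ g : A →ₗ[k] k) :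
    dmul Δ (f₁ - f₂) g = dmul Δ f₁ g - dmul Δ f₂ g :=
  eq_sub_of_add_eq (by rw [← dmul_add_left, sub_add_cancel])

theorem dmul_sub_right (Δ : A →ₗ[k] A ⊗[k] A) (f g₁ g₂ : A →ₗ[k] k) :
    dmul Δ f (g₁ - g₂) = dmul Δ f g₁ - dmul Δ f g₂ :=
  eq_sub_of_add_eq (by rw [← dmul_add_right, sub_add_cancel])

theorem IsSubcoalgebra.dmul_mem_dualAnnihilator {Δ : A →ₗ[k] A ⊗[k] A} {B : Submodule k A}
    (hB : IsSubcoalgebra Δ B) {f : A →ₗ[k] k} (hf : f ∈ B.dualAnnihilator) (g : A →ₗ[k] k) :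
    dmul Δ f g ∈ B.dualAnnihilator := by
  rw [Submodule.mem_dualAnnihilator] at hf ⊢
  intro b hb
  obtain ⟨t, ht⟩ := hB b hb
  have hfB : f ∘ₗ B.subtype = 0 := LinearMap.ext fun x => hf x x.2
  simp only [dmul, LinearMap.comp_apply, ← ht, TensorProduct.map_map, hfB,
    TensorProduct.map_zero_left, LinearMap.zero_apply, map_zero]

theorem IsSubcoalgebra.intDer_le_compatibleMaps {Δ : A →ₗ[k] A ⊗[k] A} {B : Submodule k A}
    (hB : IsSubcoalgebra Δ B) :
    IntDer Δ ≤ Submodule.compatibleMaps B.dualAnnihilator B.dualAnnihilator := by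
  refine Submodule.span_le.mpr ?_
  rintro _ ⟨u, v, rfl⟩ f hf
  exact Submodule.sub_mem _
    (hB.dmul_mem_dualAnnihilator (hB.dmul_mem_dualAnnihilator hf u) v)
    (hB.dmul_mem_dualAnnihilator (hB.dmul_mem_dualAnnihilator hf v) u)

theorem IsSubcoalgebra.dualAnnihilator_le_comap {Δ : A →ₗ[k] A ⊗[k] A} {B : Submodule k A}
    (hB : IsSubcoalgebra Δ B) {d i : (A →ₗ[k] k) →ₗ[k] (A →ₗ[k] k)} (hi : i ∈ IntDer Δ)
    (hdi : ∀ f : (A →ₗ[k] k), ∀ b ∈ B, d f b = i f b) :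
    B.dualAnnihilator ≤ B.dualAnnihilator.comap d := by
  intro f hf
  have hif : i f ∈ B.dualAnnihilator := hB.intDer_le_compatibleMaps hi hf
  rw [Submodule.mem_dualAnnihilator] at hif
  exact (Submodule.mem_dualAnnihilator _).mpr fun b hb => (hdi f b hb).trans (hif b hb)

namespace IsDerivation

variable {Δ : A →ₗ[k] A ⊗[k] A} {D : (A →ₗ[k] k) →ₗ[k] (A →ₗ[k] k)}

theorem commutator {D' : (A →ₗ[k] k) →ₗ[k] (A →ₗ[k] k)} (hD : IsDerivation Δ D)
    (hD' : IsDerivation Δ D') : IsDerivation Δ (D' ∘ₗ D - D ∘ₗ D') := by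
  intro f g
  simp only [LinearMap.sub_apply, LinearMap.comp_apply, hD _ _, hD' _ _, map_add,
    dmul_sub_left, dmul_sub_right]
  abel

theorem commutator_commD (hD : IsDerivation Δ D) (u v : A →ₗ[k] k) :
    D ∘ₗ commD Δ u v - commD Δ u v ∘ₗ D = commD Δ (D u) v + commD Δ u (D v) := by
  ext g : 1
  simp only [commD, Rop, LinearMap.sub_apply, LinearMap.add_apply, LinearMap.comp_apply,
    LinearMap.coe_mk, AddHom.coe_mk, map_sub, hD _ _, dmul_add_left]
  abel

theorem comp_sub_comp_mem_intDer (hD : IsDerivation Δ D) {i : (A →ₗ[k] k) →ₗ[k] (A →ₗ[k] k)}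
    (hi : i ∈ IntDer Δ) : D ∘ₗ i - i ∘ₗ D ∈ IntDer Δ := by
  induction hi using Submodule.span_induction with
  | mem _ h =>
    obtain ⟨u, v, rfl⟩ := h
    rw [hD.commutator_commD]
    exact Submodule.add_mem _ (Submodule.subset_span ⟨D u, v, rfl⟩)
      (Submodule.subset_span ⟨u, D v, rfl⟩)
  | zero =>
    convert (IntDer Δ).zero_mem
    ext
    simp
  | add x y _ _ hx hy =>
    convert Submodule.add_mem _ hx hy using 1
    rw [LinearMap.comp_add, LinearMap.add_comp]
    abel
  | smul c x _ hx =>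
    convert Submodule.smul_mem _ c hx using 1
    ext f a
    simp [mul_sub]

end IsDerivation

theorem wIntDer_comm_closed_general {k : Type*} [Field k] {A : Type*} [AddCommGroup A] [Module k A]
    (Δ : A →ₗ[k] A ⊗[k] A)
    (d₁ d₂ : (A →ₗ[k] k) →ₗ[k] (A →ₗ[k] k))
    (h₁ : IsWIntDer Δ d₁) (h₂ : IsWIntDer Δ d₂) :
    IsWIntDer Δ (d₂ ∘ₗ d₁ - d₁ ∘ₗ d₂) := by
  refine ⟨h₁.1.commutator h₂.1, fun B hB hfin => ?_⟩
  obtain ⟨i₁, hi₁, he₁⟩ := h₁.2 B hB hfin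
  obtain ⟨i₂, hi₂, he₂⟩ := h₂.2 B hB hfin
  refine ⟨d₂ ∘ₗ i₁ - i₁ ∘ₗ d₂, h₂.1.comp_sub_comp_mem_intDer hi₁, fun f b hb => ?_⟩
  have hdiff : d₁ f - i₁ f ∈ B.dualAnnihilator :=
    (Submodule.mem_dualAnnihilator _).mpr fun b hb => sub_eq_zero.mpr (he₁ f b hb)
  have hd₂ : d₂ (d₁ f - i₁ f) b = 0 :=
    (Submodule.mem_dualAnnihilator _).mp (hB.dualAnnihilator_le_comap hi₂ he₂ hdiff) b hb
  rw [map_sub, LinearMap.sub_apply, sub_eq_zero] at hd₂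
  simp only [LinearMap.sub_apply, LinearMap.comp_apply, hd₂, he₁ (d₂ f) b hb]

/-- **Lemma 1.** For a Jordan coalgebra `⟨A, Δ⟩` over a field of characteristic not 2,
the space of weakly inner derivations of the dual algebra `A*` is closed under the
commutator `[d₁, d₂] = d₁d₂ - d₂d₁` (right-operator convention), i.e. it is a
subalgebra of the Lie algebra `Der(A*)`. -/
theorem wIntDer_comm_closed {k : Type*} [Field k] {A : Type*} [AddCommGroup A] [Module k A]
    (h2 : (2 : k) ≠ 0) (Δ : A →ₗ[k] A ⊗[k] A) (hJ : IsJordanCoalgebra Δ)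
    (d₁ d₂ : (A →ₗ[k] k) →ₗ[k] (A →ₗ[k] k))
    (h₁ : IsWIntDer Δ d₁) (h₂ : IsWIntDer Δ d₂) :
    IsWIntDer Δ (d₂ ∘ₗ d₁ - d₁ ∘ₗ d₂) :=
  wIntDer_comm_closed_general Δ d₁ d₂ h₁ h₂
end

section
/- Let ⟨A, Δ⟩ be a Jordan coalgebra over a field k of characteristic not 2 whose dual algebra A* is unital, and let B be a subcoalgebra of ⟨A, Δ⟩. Then Ann(B) = B^⊥, and [B^⊥, B] = 0 as operators on the null extension C = A* ⊕ A. Moreover, if B is finite-dimensional, then the space [A*, B] is finite-dimensional. -/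
/-!
Unitality gives `⟨f, b⟩ = ⟨1 f, b⟩ = ⟨1, f·b⟩`, so `Ann(B) ⊆ B^⊥`; conversely
`f·b = Σ b₍₁₎⟨f, b₍₂₎⟩` with `Δb ∈ B ⊗ B` vanishes for `f ∈ B^⊥`. On `C` the operator `[f, b]` is
`z ↦ (0, (z₁f)·b − f·(z₁·b))`; as `B` is stable under the action and `B^⊥` is an ideal of `A*`,
it vanishes for `f ∈ B^⊥`. So `[f, b]` depends only on `f|_B`, and `[A*, B]` is the image of
`B* ⊗ B`.
-/

open TensorProduct

variable {k : Type*} [Field k] {A : Type*} [AddCommGroup A] [Module k A]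

/-- Multiplication in the null extension `C = A* ⊕ A`. -/
noncomputable def cmul (Δ : A →ₗ[k] A ⊗[k] A) (x y : (A →ₗ[k] k) × A) :
    (A →ₗ[k] k) × A :=
  (dmul Δ x.1 y.1, lact Δ x.1 y.2 + lact Δ y.1 x.2)

theorem lact_add_left (Δ : A →ₗ[k] A ⊗[k] A) (f₁ f₂ : (A →ₗ[k] k)) (a : A) :
    lact Δ (f₁ + f₂) a = lact Δ f₁ a + lact Δ f₂ a := by
  simp [lact, TensorProduct.map_add_right]

theorem lact_smul_left (Δ : A →ₗ[k] A ⊗[k] A) (c : k) (f : (A →ₗ[k] k)) (a : A) :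
    lact Δ (c • f) a = c • lact Δ f a := by
  simp [lact, TensorProduct.map_smul_right]

/-- Right multiplication by an element of the null extension `C = A* ⊕ A`,
as a linear operator on `C`. -/
noncomputable def RopC (Δ : A →ₗ[k] A ⊗[k] A) (x : (A →ₗ[k] k) × A) :
    ((A →ₗ[k] k) × A) →ₗ[k] ((A →ₗ[k] k) × A) where
  toFun y := cmul Δ y x
  map_add' y z := by
    simp only [cmul, Prod.fst_add, Prod.snd_add, Prod.mk_add_mk, dmul_add_left,
      lact_add_left, map_add]
    rw [Prod.mk.injEq]
    constructor
    · rfl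
    · abel
  map_smul' c y := by
    simp only [cmul, Prod.smul_fst, Prod.smul_snd, Prod.smul_mk, dmul_smul_left,
      lact_smul_left, map_smul, RingHom.id_apply, smul_add]

/-- The operator `[x,y] = x'y' - y'x'` on the null extension `C`
(right-operator convention: `z[x,y] = (zx)y - (zy)x`). -/
noncomputable def commC (Δ : A →ₗ[k] A ⊗[k] A) (x y : (A →ₗ[k] k) × A) :
    ((A →ₗ[k] k) × A) →ₗ[k] ((A →ₗ[k] k) × A) :=
  RopC Δ y ∘ₗ RopC Δ x - RopC Δ x ∘ₗ RopC Δ y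

/-- The mixed commutator operator `[f,a]` on `C`, for `f ∈ A*` and `a ∈ A`. -/
noncomputable def commMixed (Δ : A →ₗ[k] A ⊗[k] A) (f : (A →ₗ[k] k)) (a : A) :
    ((A →ₗ[k] k) × A) →ₗ[k] ((A →ₗ[k] k) × A) :=
  commC Δ (f, 0) (0, a)

/-- The space `[A*, A]`, spanned by the mixed commutators, inside `End(C)`. -/
noncomputable def CommAA (Δ : A →ₗ[k] A ⊗[k] A) :
    Submodule k (((A →ₗ[k] k) × A) →ₗ[k] ((A →ₗ[k] k) × A)) :=
  Submodule.span k {u | ∃ (f : (A →ₗ[k] k)) (a : A), u = commMixed Δ f a}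

theorem dmul_apply (Δ : A →ₗ[k] A ⊗[k] A) (g f : A →ₗ[k] k) (a : A) :
    dmul Δ g f a = g (lact Δ f a) := by
  simp only [dmul, lact, LinearMap.comp_apply]
  induction Δ a using TensorProduct.induction_on with
  | zero => simp
  | tmul x y => simp [mul_comm]
  | add u v hu hv => simp_all

theorem lact_zero_left (Δ : A →ₗ[k] A ⊗[k] A) (a : A) : lact Δ 0 a = 0 := by
  simp [lact]

theorem mem_dualAnnihilator_of_lact_eq_zero {Δ : A →ₗ[k] A ⊗[k] A} {one : A →ₗ[k] k}
    (hone : ∀ f, dmul Δ one f = f) {B : Submodule k A} {f : A →ₗ[k] k}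
    (hf : ∀ b ∈ B, lact Δ f b = 0) : f ∈ B.dualAnnihilator :=
  (Submodule.mem_dualAnnihilator f).mpr fun b hb => by
    rw [← hone f, dmul_apply, hf b hb, map_zero]

theorem commMixed_apply (Δ : A →ₗ[k] A ⊗[k] A) (f : A →ₗ[k] k) (a : A) (z : (A →ₗ[k] k) × A) :
    commMixed Δ f a z = (0, lact Δ (dmul Δ z.1 f) a - lact Δ f (lact Δ z.1 a)) := by
  simp [commMixed, commC, RopC, cmul, dmul_zero_left, dmul_zero_right, lact_zero_left]

noncomputable def commMixedBilin (Δ : A →ₗ[k] A ⊗[k] A) :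
    (A →ₗ[k] k) →ₗ[k] A →ₗ[k] ((A →ₗ[k] k) × A) →ₗ[k] ((A →ₗ[k] k) × A) :=
  LinearMap.mk₂ k (commMixed Δ)
    (fun f g a => by ext z <;> simp [commMixed_apply, dmul_add_right, lact_add_left] <;> abel)
    (fun c f a => by ext z <;> simp [commMixed_apply, dmul_smul_right, lact_smul_left, smul_sub])
    (fun f a b => by ext z <;> simp [commMixed_apply] <;> abel)
    (fun c f a => by ext z <;> simp [commMixed_apply, smul_sub])

@[simp]
theorem commMixedBilin_apply (Δ : A →ₗ[k] A ⊗[k] A) (f : A →ₗ[k] k) (a : A) :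
    commMixedBilin Δ f a = commMixed Δ f a := rfl

namespace IsSubcoalgebra

variable {Δ : A →ₗ[k] A ⊗[k] A} {B : Submodule k A}

theorem lact_mem (hB : IsSubcoalgebra Δ B) (f : A →ₗ[k] k) {b : A} (hb : b ∈ B) :
    lact Δ f b ∈ B := by
  obtain ⟨t, ht⟩ := hB b hb
  simp only [lact, LinearMap.comp_apply, ← ht]
  clear ht
  induction t using TensorProduct.induction_on with
  | zero => simp
  | tmul x y => simpa using B.smul_mem (f y) x.2
  | add u v hu hv => simpa only [map_add] using B.add_mem hu hv

theorem lact_eq_zero_of_mem_dualAnnihilator (hB : IsSubcoalgebra Δ B) {f : A →ₗ[k] k}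
    (hf : f ∈ B.dualAnnihilator) {b : A} (hb : b ∈ B) : lact Δ f b = 0 := by
  have hfB : f ∘ₗ B.subtype = 0 := LinearMap.ext fun x =>
    (Submodule.mem_dualAnnihilator f).mp hf x x.2
  obtain ⟨t, ht⟩ := hB b hb
  simp only [lact, LinearMap.comp_apply, ← ht, ← LinearMap.comp_apply (map _ f),
    ← TensorProduct.map_comp, hfB, TensorProduct.map_zero_right, LinearMap.zero_apply, map_zero]

theorem dmul_mem_dualAnnihilator_s1 (hB : IsSubcoalgebra Δ B) (g : A →ₗ[k] k) {f : A →ₗ[k] k}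
    (hf : f ∈ B.dualAnnihilator) : dmul Δ g f ∈ B.dualAnnihilator :=
  (Submodule.mem_dualAnnihilator _).mpr fun b hb => by
    rw [dmul_apply, hB.lact_eq_zero_of_mem_dualAnnihilator hf hb, map_zero]

theorem commMixed_eq_zero (hB : IsSubcoalgebra Δ B) {f : A →ₗ[k] k}
    (hf : f ∈ B.dualAnnihilator) {b : A} (hb : b ∈ B) : commMixed Δ f b = 0 := by
  refine LinearMap.ext fun z => ?_
  simp [commMixed_apply,
    hB.lact_eq_zero_of_mem_dualAnnihilator (hB.dmul_mem_dualAnnihilator_s1 z.1 hf) hb,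
    hB.lact_eq_zero_of_mem_dualAnnihilator hf (hB.lact_mem z.1 hb)]

theorem commMixed_congr (hB : IsSubcoalgebra Δ B) {f g : A →ₗ[k] k}
    (hfg : f - g ∈ B.dualAnnihilator) {b : A} (hb : b ∈ B) : commMixed Δ f b = commMixed Δ g b :=
  calc commMixed Δ f b = commMixedBilin Δ (g + (f - g)) b := by rw [add_sub_cancel]; rfl
    _ = commMixed Δ g b + commMixed Δ (f - g) b := by rw [map_add, LinearMap.add_apply]; rfl
    _ = commMixed Δ g b := by rw [hB.commMixed_eq_zero hfg hb, add_zero]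

theorem fg_span_commMixed (hB : IsSubcoalgebra Δ B) [FiniteDimensional k B] :
    (Submodule.span k {u | ∃ (f : A →ₗ[k] k), ∃ b ∈ B, u = commMixed Δ f b}).FG := by
  obtain ⟨extend, hextend⟩ := B.subtype.dualMap.exists_rightInverse_of_surjective
    (LinearMap.range_eq_top.mpr (B.subtype.dualMap_surjective_of_injective B.injective_subtype))
  let β := ((commMixedBilin Δ).comp extend).compl₂ B.subtype
  -- the additive group on `End C` that `Submodule.FG.of_le` expects is not found by unification
  let _ : AddCommGroup (((A →ₗ[k] k) × A) →ₗ[k] ((A →ₗ[k] k) × A)) := LinearMap.addCommGroup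
  refine (Submodule.fg_range (TensorProduct.lift β)).of_le ?_
  rw [Submodule.span_le]
  rintro _ ⟨f, b, hb, rfl⟩
  refine ⟨B.subtype.dualMap f ⊗ₜ ⟨b, hb⟩, ?_⟩
  show commMixed Δ (extend (B.subtype.dualMap f)) b = commMixed Δ f b
  refine hB.commMixed_congr ((Submodule.mem_dualAnnihilator _).mpr fun x hx => ?_) hb
  have hext := LinearMap.congr_fun (LinearMap.congr_fun hextend (B.subtype.dualMap f)) ⟨x, hx⟩
  simp only [LinearMap.comp_apply, LinearMap.id_apply, LinearMap.dualMap_apply,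
    Submodule.subtype_apply] at hext
  rw [LinearMap.sub_apply, hext, sub_self]

end IsSubcoalgebra

theorem prop1_ann_comm_general {k : Type*} [Field k] {A : Type*} [AddCommGroup A] [Module k A]
    (Δ : A →ₗ[k] A ⊗[k] A)
    (one : A →ₗ[k] k) (hone : ∀ f, dmul Δ one f = f ∧ dmul Δ f one = f)
    (B : Submodule k A) (hB : IsSubcoalgebra Δ B) :
    {f : A →ₗ[k] k | ∀ b ∈ B, lact Δ f b = 0} = (B.dualAnnihilator : Set (A →ₗ[k] k)) ∧
    Submodule.span k {u | ∃ f ∈ B.dualAnnihilator, ∃ b ∈ B,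
        u = commC Δ ((f, 0) : (A →ₗ[k] k) × A) ((0, b) : (A →ₗ[k] k) × A)} = ⊥ ∧
    (FiniteDimensional k B →
      Module.Finite k (Submodule.span k {u | ∃ (f : A →ₗ[k] k), ∃ b ∈ B,
        u = commC Δ ((f, 0) : (A →ₗ[k] k) × A) ((0, b) : (A →ₗ[k] k) × A)})) := by
  refine ⟨Set.ext fun f => ⟨mem_dualAnnihilator_of_lact_eq_zero fun g => (hone g).1,
    fun hf _ hb => hB.lact_eq_zero_of_mem_dualAnnihilator hf hb⟩, ?_,
    fun _ => Module.Finite.iff_fg.mpr hB.fg_span_commMixed⟩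
  rw [Submodule.span_eq_bot]
  rintro _ ⟨f, hf, b, hb, rfl⟩
  exact hB.commMixed_eq_zero hf hb

/-- **Proposition 1.** Let `⟨A, Δ⟩` be a Jordan coalgebra (char k ≠ 2) with unital dual
algebra `A*`, and let `B` be a subcoalgebra. Then `Ann(B) = B^⊥`; the span of the
commutator operators `[f, b]` (`f ∈ B^⊥`, `b ∈ B`) on the null extension `C = A* ⊕ A`
is zero; and if `B` is finite-dimensional then the space `[A*, B]` is finite-dimensional. -/
theorem prop1_ann_comm {k : Type*} [Field k] {A : Type*} [AddCommGroup A] [Module k A]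
    (h2 : (2 : k) ≠ 0) (Δ : A →ₗ[k] A ⊗[k] A) (hJ : IsJordanCoalgebra Δ)
    (one : A →ₗ[k] k) (hone : ∀ f, dmul Δ one f = f ∧ dmul Δ f one = f)
    (B : Submodule k A) (hB : IsSubcoalgebra Δ B) :
    {f : A →ₗ[k] k | ∀ b ∈ B, lact Δ f b = 0} = (B.dualAnnihilator : Set (A →ₗ[k] k)) ∧
    Submodule.span k {u | ∃ f ∈ B.dualAnnihilator, ∃ b ∈ B,
        u = commC Δ ((f, 0) : (A →ₗ[k] k) × A) ((0, b) : (A →ₗ[k] k) × A)} = ⊥ ∧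
    (FiniteDimensional k B →
      Module.Finite k (Submodule.span k {u | ∃ (f : A →ₗ[k] k), ∃ b ∈ B,
        u = commC Δ ((f, 0) : (A →ₗ[k] k) × A) ((0, b) : (A →ₗ[k] k) × A)})) :=
  prop1_ann_comm_general Δ one hone B hB
end

section
/- Let ⟨A, Δ⟩ be a Jordan coalgebra over a field k of characteristic not 2 whose dual algebra A* is unital. Every weakly inner derivation d ∈ WIntDer(A*) extends to a derivation D of the null extension C = A* ⊕ A (with D = d on A*) such that: (i) BD ⊆ B for every subcoalgebra B of ⟨A, Δ⟩; (ii) ⟨fd, a⟩ = −⟨f, aD⟩ for all f ∈ A* and a ∈ A; and (iii) for every finite-dimensional subcoalgebra B there exists i ∈ IntDer(A*) such that bD = b·i and ⟨fD, b⟩ = ⟨fi, b⟩ for all b ∈ B and f ∈ A*. -/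
open TensorProduct

variable {k : Type*} [Field k] {A : Type*} [AddCommGroup A] [Module k A]

/-!
The derivation `D` is `d ⊕ (-E)`, where `E : A → A` is the transpose of `d`, `⟨fd, x⟩ = ⟨f, xE⟩`.
To find `xE`, put `x` into a finite-dimensional subcoalgebra `B`: on `B`, `d` agrees with an inner
derivation `Σ [fᵢ, gᵢ]`, whose transpose `Σ (L fᵢ L gᵢ - L gᵢ L fᵢ)`, with `L f x = f·x`,
preserves every subcoalgebra. So the heart of the matter is local finiteness: every element `a`
of a Jordan coalgebra lies in a finite-dimensional subcoalgebra.

The dual algebra is commutative, so the subcoalgebras are the subspaces stable under all `L f`,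
and the linearized Jordan identity says that modulo shorter words `L f L g L h ≡ -L h L g L f`.
Hence a letter `κ` with `L κ` vanishing on the span `W₁` of `a` and all `f·a` can be moved to the
inner end of a word, where it dies, and two equal letters at even distance can be brought
together as `f g f`, which is shorter because `2` is invertible. Modulo such `κ`, the letters
range over the span of finitely many functionals `p₁, …, pₙ`, so by pigeonhole every word of
length `2n + 1` applied to `a` reduces to shorter ones: the span of the words of length `≤ 2n`
applied to `a` is the subcoalgebra sought.
-/

section Duality

variable {V W V' : Type*} [AddCommGroup V] [Module k V] [AddCommGroup W] [Module k W]
  [AddCommGroup V'] [Module k V']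

theorem eq_of_forall_dual_apply_eq {u v : V} (h : ∀ φ : Module.Dual k V, φ u = φ v) : u = v :=
  Module.eval_apply_injective k (LinearMap.ext h)

theorem exists_dualMap_eq (d : Module.Dual k V →ₗ[k] Module.Dual k V)
    (h : ∀ x, ∃ u, ∀ φ : Module.Dual k V, φ u = d φ x) : ∃ E : V →ₗ[k] V, E.dualMap = d := by
  choose u hu using h
  refine ⟨{ toFun := u
            map_add' := fun x y => eq_of_forall_dual_apply_eq (k := k) fun φ => by simp [hu]
            map_smul' := fun c x => eq_of_forall_dual_apply_eq (k := k) fun φ => by simp [hu] },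
    LinearMap.ext fun φ => LinearMap.ext fun x => hu x φ⟩

theorem TensorProduct.eq_zero_of_forall_rid_lTensor_eq_zero (s : V ⊗[k] W)
    (h : ∀ φ : Module.Dual k W, TensorProduct.rid k V (φ.lTensor V s) = 0) : s = 0 := by
  classical
  refine (equivFinsuppOfBasisRight (Module.Free.chooseBasis k W)).injective ?_
  ext i
  simp [equivFinsuppOfBasisRight_apply, h]

theorem TensorProduct.eq_zero_of_forall_lid_rTensor_eq_zero (s : V ⊗[k] W)
    (h : ∀ φ : Module.Dual k V, TensorProduct.lid k W (φ.rTensor W s) = 0) : s = 0 := by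
  classical
  refine (equivFinsuppOfBasisLeft (Module.Free.chooseBasis k V)).injective ?_
  ext i
  simp [equivFinsuppOfBasisLeft_apply, h]

theorem TensorProduct.rid_lTensor_rTensor (p : V →ₗ[k] V') (φ : Module.Dual k W) (s : V ⊗[k] W) :
    TensorProduct.rid k V' (φ.lTensor V' (p.rTensor W s)) =
      p (TensorProduct.rid k V (φ.lTensor V s)) := by
  induction s using TensorProduct.induction_on <;> simp_all

theorem TensorProduct.lid_rTensor_lTensor (p : V →ₗ[k] V') (φ : Module.Dual k W) (s : W ⊗[k] V) :
    TensorProduct.lid k V' (φ.rTensor V' (p.lTensor W s)) =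
      p (TensorProduct.lid k V (φ.rTensor V s)) := by
  induction s using TensorProduct.induction_on <;> simp_all

theorem mem_range_map_subtype_of_forall (B : Submodule k V) (t : V ⊗[k] V)
    (hr : ∀ φ : Module.Dual k V, TensorProduct.rid k V (φ.lTensor V t) ∈ B)
    (hl : ∀ φ : Module.Dual k V, TensorProduct.lid k V (φ.rTensor V t) ∈ B) :
    t ∈ LinearMap.range (TensorProduct.map B.subtype B.subtype) := by
  -- For a projection `p` onto `B`, the two hypotheses say that `p ⊗ 1` and `1 ⊗ p` fix `t`.
  obtain ⟨q, hq⟩ := B.exists_isCompl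
  have hp {x : V} (hx : x ∈ B) : B.projection q hq x = x :=
    Submodule.projection_apply_left hq ⟨x, hx⟩
  have hpr : (B.projection q hq).rTensor V t = t := by
    rw [← sub_eq_zero]
    refine TensorProduct.eq_zero_of_forall_rid_lTensor_eq_zero _ fun φ => ?_
    simp [TensorProduct.rid_lTensor_rTensor, hp (hr φ)]
  have hpl : (B.projection q hq).lTensor V t = t := by
    rw [← sub_eq_zero]
    refine TensorProduct.eq_zero_of_forall_lid_rTensor_eq_zero _ fun φ => ?_
    simp [TensorProduct.lid_rTensor_lTensor, hp (hl φ)]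
  refine ⟨TensorProduct.map (B.projectionOnto q hq) (B.projectionOnto q hq) t, ?_⟩
  rw [← LinearMap.comp_apply, ← TensorProduct.map_comp, ← LinearMap.rTensor_comp_lTensor]
  exact (congrArg _ hpl).trans hpr

end Duality

section WordSpan

variable {M V : Type*} [AddCommGroup M] [Module k M] [AddCommGroup V] [Module k V]
  (L : M →ₗ[k] Module.End k V)

def wordSpan (a : V) (j : ℕ) : Submodule k V :=
  Submodule.span k {x | ∃ w : List M, w.length ≤ j ∧ (w.map L).prod a = x}

variable {L} {a : V}

theorem wordSpan_mono : Monotone (wordSpan L a) := fun _ _ hij =>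
  Submodule.span_mono fun _ ⟨w, hw, hx⟩ => ⟨w, hw.trans hij, hx⟩

theorem prod_apply_mem_wordSpan (w : List M) : (w.map L).prod a ∈ wordSpan L a w.length :=
  Submodule.subset_span ⟨w, le_rfl, rfl⟩

theorem mem_wordSpan_self (j : ℕ) : a ∈ wordSpan L a j :=
  wordSpan_mono (Nat.zero_le j) (prod_apply_mem_wordSpan [])

theorem apply_mem_wordSpan_succ {y : V} {j : ℕ} (hy : y ∈ wordSpan L a j) (f : M) :
    L f y ∈ wordSpan L a (j + 1) := by
  have : wordSpan L a j ≤ (wordSpan L a (j + 1)).comap (L f) := Submodule.span_le.2 <| by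
    rintro _ ⟨w, hw, rfl⟩
    exact Submodule.subset_span ⟨f :: w, by simpa using hw, by simp⟩
  exact this hy

theorem prod_apply_mem_wordSpan_add {y : V} {j : ℕ} (hy : y ∈ wordSpan L a j) (w : List M) :
    (w.map L).prod y ∈ wordSpan L a (j + w.length) := by
  induction w with
  | nil => simpa using hy
  | cons f w ih => simpa [← add_assoc] using apply_mem_wordSpan_succ ih f

theorem wordSpan_le {B : Submodule k V} (hB : ∀ f, ∀ y ∈ B, L f y ∈ B) (ha : a ∈ B) (j : ℕ) :
    wordSpan L a j ≤ B := by
  refine Submodule.span_le.2 ?_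
  rintro _ ⟨w, -, rfl⟩
  induction w with
  | nil => simpa using ha
  | cons f w ih => simpa using hB f _ ih

theorem wordSpan_finiteDimensional
    (hL : ∀ U : Submodule k V, FiniteDimensional k U →
      ∃ W : Submodule k V, FiniteDimensional k W ∧ ∀ f, ∀ y ∈ U, L f y ∈ W) (j : ℕ) :
    FiniteDimensional k (wordSpan L a j) := by
  induction j with
  | zero =>
    refine Submodule.finiteDimensional_of_le (S₂ := k ∙ a) (Submodule.span_le.2 ?_)
    rintro _ ⟨w, hw, rfl⟩
    simp [List.length_eq_zero_iff.1 (Nat.le_zero.1 hw)]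
  | succ j ih =>
    obtain ⟨W, hW, hLW⟩ := hL _ ih
    refine Submodule.finiteDimensional_of_le (S₂ := wordSpan L a j ⊔ W) (Submodule.span_le.2 ?_)
    rintro _ ⟨_ | ⟨f, w⟩, hw, rfl⟩
    · exact Submodule.mem_sup_left (mem_wordSpan_self j)
    · simp only [List.map_cons, List.prod_cons, Module.End.mul_apply]
      exact Submodule.mem_sup_right <|
        hLW f _ (wordSpan_mono (by simpa using hw) (prod_apply_mem_wordSpan w))

theorem apply_mem_wordSpan_of_forall_length_eq {m : ℕ}
    (h : ∀ w : List M, w.length = m + 1 → (w.map L).prod a ∈ wordSpan L a m) (f : M) {y : V}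
    (hy : y ∈ wordSpan L a m) : L f y ∈ wordSpan L a m := by
  have : wordSpan L a (m + 1) ≤ wordSpan L a m := Submodule.span_le.2 <| by
    rintro _ ⟨w, hw, rfl⟩
    rcases hw.lt_or_eq with hw | hw
    · exact wordSpan_mono (Nat.lt_succ_iff.1 hw) (prod_apply_mem_wordSpan w)
    · exact h w hw
  exact this (apply_mem_wordSpan_succ hy f)

end WordSpan

theorem List.exists_eq_append_getElem_cons_append_getElem_cons {α : Type*} (l : List α)
    {i j : ℕ} (hij : i < j) (hj : j < l.length) :
    ∃ ψ μ ω : List α, l = ψ ++ l[i] :: (μ ++ l[j] :: ω) ∧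
      ψ.length = i ∧ ψ.length + μ.length + 1 = j := by
  refine ⟨l.take i, (l.drop (i + 1)).take (j - i - 1), l.drop (j + 1), ?_, by simp; omega,
    by simp; omega⟩
  conv_lhs => rw [← List.take_append_drop i l, List.drop_eq_getElem_cons (by omega),
    ← List.take_append_drop (j - i - 1) (l.drop (i + 1)), List.drop_drop,
    show i + 1 + (j - i - 1) = j by omega, List.drop_eq_getElem_cons hj]

section Reversal

variable {M V : Type*} [AddCommGroup M] [Module k M] [AddCommGroup V] [Module k V]

/-- Modulo shorter words, reversing three consecutive letters of a word changes its sign. -/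
def ReversesTriples (L : M →ₗ[k] Module.End k V) (a : V) : Prop :=
  ∀ f g h j, ∀ y ∈ wordSpan L a j, L f (L g (L h y)) + L h (L g (L f y)) ∈ wordSpan L a (j + 2)

variable {L : M →ₗ[k] Module.End k V} {a : V}

theorem ReversesTriples.add_reverse_mem (hrev : ReversesTriples L a) (ψ ω : List M) (f g h : M) :
    ((ψ ++ f :: g :: h :: ω).map L).prod a + ((ψ ++ h :: g :: f :: ω).map L).prod a ∈
      wordSpan L a (ω.length + 2 + ψ.length) := by
  simp only [List.map_append, List.map_cons, List.prod_append, List.prod_cons,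
    Module.End.mul_apply, ← map_add]
  exact prod_apply_mem_wordSpan_add (hrev f g h _ _ (prod_apply_mem_wordSpan ω)) _

theorem ReversesTriples.prod_mem_of_annihilates (hrev : ReversesTriples L a) {κ : M}
    (hκ : ∀ y ∈ wordSpan L a 1, L κ y = 0) :
    ∀ ψ ω : List M, ((ψ ++ κ :: ω).map L).prod a ∈ wordSpan L a (ψ.length + ω.length)
  | ψ, [] => by simp [hκ a (mem_wordSpan_self 1)]
  | ψ, [g] => by
    have : L κ (L g a) = 0 := hκ _ (by simpa using prod_apply_mem_wordSpan (L := L) (a := a) [g])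
    simp [this]
  | ψ, g :: f :: ω => by
    have hrec := hrev.prod_mem_of_annihilates hκ (ψ ++ [f, g]) ω
    rw [← add_sub_cancel_right (((ψ ++ κ :: g :: f :: ω).map L).prod a)
      (((ψ ++ f :: g :: κ :: ω).map L).prod a)]
    refine sub_mem (wordSpan_mono ?_ (hrev.add_reverse_mem ψ ω κ g f))
      (wordSpan_mono ?_ (by simpa using hrec)) <;> simp <;> omega

theorem ReversesTriples.prod_mem_of_eq (hrev : ReversesTriples L a) (h2 : (2 : k) ≠ 0) (f : M) :
    ∀ ψ μ ω : List M, Odd μ.length →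
      ((ψ ++ f :: (μ ++ f :: ω)).map L).prod a ∈
        wordSpan L a (ψ.length + μ.length + ω.length + 1)
  | _, [], _, hμ => absurd hμ (by simp)
  | ψ, [g], ω, _ => by
    have h := Submodule.smul_mem _ (2 : k)⁻¹ (hrev.add_reverse_mem ψ ω f g f)
    rw [← two_smul k, inv_smul_smul₀ h2] at h
    refine wordSpan_mono ?_ (by simpa using h)
    simp; omega
  | ψ, g :: h :: μ, ω, hμ => by
    have hrec := hrev.prod_mem_of_eq h2 f (ψ ++ [h, g]) μ ω (by simpa [Nat.odd_add_one] using hμ)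
    rw [← add_sub_cancel_right (((ψ ++ f :: (g :: h :: μ ++ f :: ω)).map L).prod a)
      (((ψ ++ h :: g :: f :: (μ ++ f :: ω)).map L).prod a)]
    refine sub_mem (wordSpan_mono ?_ (by simpa using hrev.add_reverse_mem ψ (μ ++ f :: ω) f g h))
      (wordSpan_mono ?_ (by simpa using hrec)) <;> simp <;> omega

theorem ReversesTriples.prod_mem_of_forall_mem (hrev : ReversesTriples L a) (h2 : (2 : k) ≠ 0)
    (P : Finset M) {w : List M} (hw : w.length = 2 * P.card + 1) (hP : ∀ x ∈ w, x ∈ P) :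
    (w.map L).prod a ∈ wordSpan L a (2 * P.card) := by
  -- Two of the `P.card + 1` letters at even positions coincide.
  obtain ⟨i, -, j, -, hne, hij⟩ := Finset.exists_ne_map_eq_of_card_lt_of_maps_to
    (s := (Finset.univ : Finset (Fin (P.card + 1)))) (t := P)
    (f := fun i => w[2 * (i : ℕ)]) (by simp) (fun i _ => hP _ (List.getElem_mem _))
  wlog hlt : i < j generalizing i j
  · exact this j i hne.symm hij.symm (lt_of_le_of_ne (not_lt.1 hlt) hne.symm)
  obtain ⟨ψ, μ, ω, hsplit, hψ, hμ⟩ :=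
    w.exists_eq_append_getElem_cons_append_getElem_cons (i := 2 * i) (j := 2 * j)
      (by omega) (by omega)
  rw [← hij] at hsplit
  rw [hsplit]
  refine wordSpan_mono ?_ (hrev.prod_mem_of_eq h2 _ ψ μ ω ⟨j - i - 1, by omega⟩)
  have := congrArg List.length hsplit
  simp at this
  omega

theorem ReversesTriples.prod_mem_of_forall_exists_sub (hrev : ReversesTriples L a)
    (h2 : (2 : k) ≠ 0) (P : Finset M)
    (hP : ∀ f : M, ∃ q ∈ Submodule.span k (P : Set M), ∀ y ∈ wordSpan L a 1, L (f - q) y = 0) :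
    ∀ ω ψ : List M, (∀ x ∈ ψ, x ∈ P) → ψ.length + ω.length = 2 * P.card + 1 →
      ((ψ ++ ω).map L).prod a ∈ wordSpan L a (2 * P.card)
  | [], ψ, hψ, hlen => by simpa using hrev.prod_mem_of_forall_mem h2 P (by simpa using hlen) hψ
  | e :: ω, ψ, hψ, hlen => by
    let φ : M →ₗ[k] V := (ψ.map L).prod ∘ₗ L.flip ((ω.map L).prod a)
    have hφ (f : M) : φ f = ((ψ ++ f :: ω).map L).prod a := by simp [φ]
    suffices e ∈ (wordSpan L a (2 * P.card)).comap φ by simpa [hφ] using this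
    -- Split `e = κ + q`: words containing `κ` are shorter, and `q` is a combination of letters
    -- from `P`.
    obtain ⟨q, hq, hκ⟩ := hP e
    rw [← sub_add_cancel e q]
    refine add_mem ?_ (Submodule.span_le.2 (fun p hp => ?_) hq)
    · rw [Submodule.mem_comap, hφ]
      exact wordSpan_mono (by simp at hlen ⊢; omega) (hrev.prod_mem_of_annihilates hκ ψ ω)
    · rw [SetLike.mem_coe, Submodule.mem_comap, hφ]
      simpa using hrev.prod_mem_of_forall_exists_sub h2 P hP ω (ψ ++ [p])
        (by simpa [or_imp, forall_and] using ⟨hψ, hp⟩) (by simp at hlen ⊢; omega)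

theorem ReversesTriples.exists_invariant (hrev : ReversesTriples L a) (h2 : (2 : k) ≠ 0)
    (hfin : ∀ j, FiniteDimensional k (wordSpan L a j)) :
    ∃ m, ∀ f, ∀ y ∈ wordSpan L a m, L f y ∈ wordSpan L a m := by
  have := hfin 1
  have := hfin 2
  let ℓ : M →ₗ[k] (wordSpan L a 1 →ₗ[k] wordSpan L a 2) :=
    { toFun := fun f => (L f).restrict fun _ hy => apply_mem_wordSpan_succ hy f
      map_add' := fun f g => by ext; simp
      map_smul' := fun c f => by ext; simp }
  -- `L κ` vanishes on `wordSpan L a 1` iff `κ ∈ ker ℓ`, which has a finite-dimensional complement.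
  obtain ⟨Q, hQ⟩ := (LinearMap.ker ℓ).exists_isCompl
  have : FiniteDimensional k Q := Module.Finite.equiv
    ((Submodule.quotientEquivOfIsCompl _ _ hQ).symm ≪≫ₗ ℓ.quotKerEquivRange).symm
  obtain ⟨P, hPQ⟩ := (Submodule.fg_iff_finiteDimensional Q).2 this
  have hP (f : M) :
      ∃ q ∈ Submodule.span k (P : Set M), ∀ y ∈ wordSpan L a 1, L (f - q) y = 0 := by
    obtain ⟨κ, hκ, q, hq, rfl⟩ := Submodule.mem_sup.1 (hQ.sup_eq_top ▸ Submodule.mem_top (x := f))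
    refine ⟨q, hPQ ▸ hq, fun y hy => ?_⟩
    simpa [ℓ, Subtype.ext_iff] using congr($(LinearMap.mem_ker.1 hκ) ⟨y, hy⟩)
  refine ⟨2 * P.card, fun f _ => apply_mem_wordSpan_of_forall_length_eq (fun w hw => ?_) f⟩
  simpa using hrev.prod_mem_of_forall_exists_sub h2 P hP w [] (by simp) (by simpa using hw)

end Reversal

section Coalgebra

variable (Δ : A →ₗ[k] A ⊗[k] A)

theorem dmul_apply_eq_lact (f g : A →ₗ[k] k) (x : A) : dmul Δ f g x = f (lact Δ g x) := by
  simp only [dmul, lact, LinearMap.comp_apply]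
  induction Δ x using TensorProduct.induction_on <;> simp_all [mul_comm]

theorem dmul_apply_eq_ract (f g : A →ₗ[k] k) (x : A) : dmul Δ f g x = g (ract Δ f x) := by
  simp only [dmul, ract, LinearMap.comp_apply]
  induction Δ x using TensorProduct.induction_on <;> simp_all

theorem lact_eq_ract (hc : ∀ f g : A →ₗ[k] k, dmul Δ f g = dmul Δ g f) (f : A →ₗ[k] k) :
    lact Δ f = ract Δ f :=
  LinearMap.ext fun x => eq_of_forall_dual_apply_eq (k := k) fun g => by
    rw [← dmul_apply_eq_lact, hc, dmul_apply_eq_ract]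

theorem IsSubcoalgebra.lact_mem_s2 {Δ : A →ₗ[k] A ⊗[k] A} {B : Submodule k A}
    (hB : IsSubcoalgebra Δ B) (f : A →ₗ[k] k) {x : A} (hx : x ∈ B) : lact Δ f x ∈ B := by
  obtain ⟨t, ht⟩ := hB x hx
  simp only [lact, LinearMap.comp_apply, ← ht]
  clear ht
  induction t using TensorProduct.induction_on with
  | zero => simp
  | tmul y z => simpa using B.smul_mem (f z) y.2
  | add s t hs ht => simpa using add_mem hs ht

theorem isSubcoalgebra_of_lact_mem (hc : ∀ f g : A →ₗ[k] k, dmul Δ f g = dmul Δ g f)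
    {B : Submodule k A} (hB : ∀ f, ∀ x ∈ B, lact Δ f x ∈ B) : IsSubcoalgebra Δ B :=
  fun x hx => mem_range_map_subtype_of_forall B (Δ x) (fun φ => hB φ x hx) fun φ => by
    have h := hB φ x hx
    rwa [lact_eq_ract Δ hc] at h

noncomputable def lactHom : (A →ₗ[k] k) →ₗ[k] Module.End k A where
  toFun := lact Δ
  map_add' f g := LinearMap.ext (lact_add_left Δ f g)
  map_smul' c f := LinearMap.ext (lact_smul_left Δ c f)

@[simp]
theorem lactHom_apply (f : A →ₗ[k] k) : lactHom Δ f = lact Δ f := rfl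

theorem exists_finiteDimensional_lact_mem (U : Submodule k A) [FiniteDimensional k U] :
    ∃ W : Submodule k A, FiniteDimensional k W ∧ ∀ f, ∀ y ∈ U, lact Δ f y ∈ W := by
  obtain ⟨s, hs⟩ := (Submodule.fg_iff_finiteDimensional U).2 ‹_›
  obtain ⟨W, hW, hsW⟩ :=
    TensorProduct.exists_finite_submodule_left_of_setFinite (Δ '' s) (s.finite_toSet.image Δ)
  refine ⟨W, hW, fun f y hy => ?_⟩
  have hU : U ≤ (LinearMap.range (W.subtype.rTensor A)).comap Δ :=
    hs ▸ Submodule.span_le.2 fun x hx => hsW ⟨x, hx, rfl⟩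
  obtain ⟨t, ht⟩ := hU hy
  have : lact Δ f y = W.subtype (TensorProduct.rid k W (f.lTensor W t)) := by
    rw [← TensorProduct.rid_lTensor_rTensor, ht]; rfl
  exact this ▸ Submodule.coe_mem _

theorem dmul_jordan_linearized (hc : ∀ f g : A →ₗ[k] k, dmul Δ f g = dmul Δ g f)
    (hJ : ∀ f g : A →ₗ[k] k,
      dmul Δ (dmul Δ (dmul Δ f f) g) f = dmul Δ (dmul Δ f f) (dmul Δ g f))
    (h2 : (2 : k) ≠ 0) (f₁ f₂ f₃ g : A →ₗ[k] k) :
    dmul Δ (dmul Δ (dmul Δ f₁ f₂) g) f₃ + dmul Δ (dmul Δ (dmul Δ f₁ f₃) g) f₂ +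
        dmul Δ (dmul Δ (dmul Δ f₂ f₃) g) f₁ =
      dmul Δ (dmul Δ f₁ f₂) (dmul Δ g f₃) + dmul Δ (dmul Δ f₁ f₃) (dmul Δ g f₂) +
        dmul Δ (dmul Δ f₂ f₃) (dmul Δ g f₁) := by
  set J := fun f => dmul Δ (dmul Δ (dmul Δ f f) g) f - dmul Δ (dmul Δ f f) (dmul Δ g f)
  have key :
      J (f₁ + f₂ + f₃) - J (f₁ + f₂) - J (f₁ + f₃) - J (f₂ + f₃) + J f₁ + J f₂ + J f₃ = 0 := by
    simp [J, hJ]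
  simp only [J, dmul_add_left, dmul_add_right] at key
  rw [hc f₂ f₁, hc f₃ f₁, hc f₃ f₂] at key
  apply smul_right_injective _ h2
  simp only [two_smul]
  linear_combination (norm := module) key

theorem lact_jordan (hc : ∀ f g : A →ₗ[k] k, dmul Δ f g = dmul Δ g f)
    (hJ : ∀ f g : A →ₗ[k] k,
      dmul Δ (dmul Δ (dmul Δ f f) g) f = dmul Δ (dmul Δ f f) (dmul Δ g f))
    (h2 : (2 : k) ≠ 0) (f g h : A →ₗ[k] k) (x : A) :
    lact Δ f (lact Δ g (lact Δ h x)) + lact Δ h (lact Δ g (lact Δ f x)) +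
        lact Δ (dmul Δ (dmul Δ f h) g) x =
      lact Δ f (lact Δ (dmul Δ g h) x) + lact Δ h (lact Δ (dmul Δ g f) x) +
        lact Δ g (lact Δ (dmul Δ f h) x) := by
  refine eq_of_forall_dual_apply_eq (k := k) fun u => ?_
  have := congr($(dmul_jordan_linearized Δ hc hJ h2 u f h g) x)
  rw [hc (dmul Δ (dmul Δ f h) g) u, hc (dmul Δ f h) (dmul Δ g u), hc g u] at this
  simpa only [map_add, LinearMap.add_apply, dmul_apply_eq_lact] using this

theorem reversesTriples_lactHom (hJ : IsJordanCoalgebra Δ) (h2 : (2 : k) ≠ 0) (a : A) :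
    ReversesTriples (lactHom Δ) a := by
  intro f g h j y hy
  have h1 (p : A →ₗ[k] k) {z : A} (hz : z ∈ wordSpan (lactHom Δ) a (j + 1)) :
      lact Δ p z ∈ wordSpan (lactHom Δ) a (j + 2) :=
    apply_mem_wordSpan_succ hz p
  have h0 (p : A →ₗ[k] k) : lact Δ p y ∈ wordSpan (lactHom Δ) a (j + 1) :=
    apply_mem_wordSpan_succ hy p
  simp only [lactHom_apply]
  rw [← add_sub_cancel_right (_ + _) (lact Δ (dmul Δ (dmul Δ f h) g) y),
    lact_jordan Δ hJ.1 hJ.2 h2]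
  exact sub_mem (add_mem (add_mem (h1 _ (h0 _)) (h1 _ (h0 _))) (h1 _ (h0 _)))
    (wordSpan_mono (by omega) (h0 _))

theorem exists_finiteDimensional_subcoalgebra_le (hJ : IsJordanCoalgebra Δ) (h2 : (2 : k) ≠ 0)
    {B : Submodule k A} (hB : IsSubcoalgebra Δ B) {x : A} (hx : x ∈ B) :
    ∃ B' ≤ B, IsSubcoalgebra Δ B' ∧ FiniteDimensional k B' ∧ x ∈ B' := by
  have hfin := wordSpan_finiteDimensional (L := lactHom Δ) (a := x)
    (fun U _ => by simpa using exists_finiteDimensional_lact_mem Δ U)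
  obtain ⟨m, hm⟩ := (reversesTriples_lactHom Δ hJ h2 x).exists_invariant h2 hfin
  exact ⟨wordSpan (lactHom Δ) x m, wordSpan_le (fun f _ hy => hB.lact_mem_s2 f hy) hx m,
    isSubcoalgebra_of_lact_mem Δ hJ.1 (by simpa using hm), hfin m, mem_wordSpan_self m⟩

noncomputable def intDerC : Submodule k (((A →ₗ[k] k) × A) →ₗ[k] ((A →ₗ[k] k) × A)) :=
  Submodule.span k {u | ∃ f g : A →ₗ[k] k, u = commC Δ (f, 0) (g, 0)}

theorem commC_apply_inl (f g h : A →ₗ[k] k) :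
    commC Δ (f, 0) (g, 0) (h, 0) = (commD Δ f g h, 0) := by
  simp [commC, commD, RopC, Rop, cmul, lact]

theorem commC_apply_inr (f g : A →ₗ[k] k) (x : A) :
    commC Δ (f, 0) (g, 0) (0, x) = (0, lact Δ g (lact Δ f x) - lact Δ f (lact Δ g x)) := by
  simp [commC, RopC, cmul, dmul, lact]

theorem exists_mem_intDerC {i : (A →ₗ[k] k) →ₗ[k] (A →ₗ[k] k)} (hi : i ∈ IntDer Δ) :
    ∃ j ∈ intDerC Δ, ∀ h, (j (h, 0)).1 = i h := by
  induction hi using Submodule.span_induction with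
  | mem _ hu =>
    obtain ⟨f, g, rfl⟩ := hu
    exact ⟨_, Submodule.subset_span ⟨f, g, rfl⟩, fun h => by rw [commC_apply_inl]⟩
  | zero => exact ⟨0, zero_mem _, fun _ => rfl⟩
  | add _ _ _ _ h₁ h₂ =>
    obtain ⟨j₁, hj₁, e₁⟩ := h₁
    obtain ⟨j₂, hj₂, e₂⟩ := h₂
    exact ⟨j₁ + j₂, add_mem hj₁ hj₂, fun h => by simp [e₁, e₂]⟩
  | smul c _ _ h =>
    obtain ⟨j, hj, e⟩ := h
    exact ⟨c • j, Submodule.smul_mem _ c hj, fun h => by simp [e]⟩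

theorem intDerC_apply_inr {j : ((A →ₗ[k] k) × A) →ₗ[k] ((A →ₗ[k] k) × A)} (hj : j ∈ intDerC Δ)
    (x : A) : (j (0, x)).1 = 0 ∧ ∀ h : A →ₗ[k] k, h (j (0, x)).2 = -(j (h, 0)).1 x := by
  induction hj using Submodule.span_induction with
  | mem _ hu =>
    obtain ⟨f, g, rfl⟩ := hu
    simp [commC_apply_inl, commC_apply_inr, commD, Rop, dmul_apply_eq_lact]
  | zero => simp
  | add _ _ _ _ h₁ h₂ => exact ⟨by simp [h₁.1, h₂.1], fun h => by simp [h₁.2, h₂.2]; abel⟩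
  | smul c _ _ h => exact ⟨by simp [h.1], fun h' => by simp [h.2]⟩

theorem intDerC_apply_inr_mem {j : ((A →ₗ[k] k) × A) →ₗ[k] ((A →ₗ[k] k) × A)}
    (hj : j ∈ intDerC Δ) {B : Submodule k A} (hB : IsSubcoalgebra Δ B) {x : A} (hx : x ∈ B) :
    (j (0, x)).2 ∈ B := by
  induction hj using Submodule.span_induction with
  | mem _ hu =>
    obtain ⟨f, g, rfl⟩ := hu
    rw [commC_apply_inr]
    exact sub_mem (hB.lact_mem_s2 _ (hB.lact_mem_s2 _ hx)) (hB.lact_mem_s2 _ (hB.lact_mem_s2 _ hx))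
  | zero => exact zero_mem _
  | add _ _ _ _ h₁ h₂ => exact add_mem h₁ h₂
  | smul c _ _ h => exact Submodule.smul_mem _ c h

theorem IsWIntDer.exists_dualMap_eq (hJ : IsJordanCoalgebra Δ) (h2 : (2 : k) ≠ 0)
    {d : (A →ₗ[k] k) →ₗ[k] (A →ₗ[k] k)} (hd : IsWIntDer Δ d) :
    ∃ E : A →ₗ[k] A, E.dualMap = d ∧ ∀ B, IsSubcoalgebra Δ B → ∀ b ∈ B, E b ∈ B := by
  have hloc {B : Submodule k A} (hB : IsSubcoalgebra Δ B) {x : A} (hx : x ∈ B) :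
      ∃ u ∈ B, ∀ f : A →ₗ[k] k, f u = d f x := by
    obtain ⟨B', hB'B, hB', _, hx'⟩ := exists_finiteDimensional_subcoalgebra_le Δ hJ h2 hB hx
    obtain ⟨i, hi, hdi⟩ := hd.2 B' hB' ‹_›
    obtain ⟨j, hj, hji⟩ := exists_mem_intDerC Δ hi
    refine ⟨-(j (0, x)).2, hB'B (neg_mem (intDerC_apply_inr_mem Δ hj hB' hx')), fun f => ?_⟩
    rw [map_neg, (intDerC_apply_inr Δ hj x).2, neg_neg, hji, hdi f x hx']
  have htop : IsSubcoalgebra Δ ⊤ := isSubcoalgebra_of_lact_mem Δ hJ.1 fun _ _ _ => trivial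
  obtain ⟨E, rfl⟩ := _root_.exists_dualMap_eq d fun x =>
    (hloc htop Submodule.mem_top).imp fun _ h => h.2
  refine ⟨E, rfl, fun B hB b hb => ?_⟩
  obtain ⟨u, hu, hEu⟩ := hloc hB hb
  rwa [← eq_of_forall_dual_apply_eq (k := k) hEu]

theorem map_lact_of_isDerivation_dualMap {E : A →ₗ[k] A} (hd : IsDerivation Δ E.dualMap)
    (f : A →ₗ[k] k) (x : A) : E (lact Δ f x) = lact Δ f (E x) - lact Δ (E.dualMap f) x :=
  eq_of_forall_dual_apply_eq (k := k) fun h => by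
    have := congr($(hd h f) x)
    simp only [LinearMap.dualMap_apply, dmul_apply_eq_lact, LinearMap.add_apply] at this
    rw [map_sub, this, add_sub_cancel_right]

theorem prodMap_dualMap_neg_cmul {E : A →ₗ[k] A} (hd : IsDerivation Δ E.dualMap)
    (x y : (A →ₗ[k] k) × A) :
    E.dualMap.prodMap (-E) (cmul Δ x y) =
      cmul Δ (E.dualMap.prodMap (-E) x) y + cmul Δ x (E.dualMap.prodMap (-E) y) := by
  refine Prod.ext (hd x.1 y.1) ?_
  simp [cmul, map_lact_of_isDerivation_dualMap Δ hd]
  abel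

end Coalgebra

theorem prop2_extension_general {k : Type*} [Field k] {A : Type*} [AddCommGroup A] [Module k A]
    (h2 : (2 : k) ≠ 0) (Δ : A →ₗ[k] A ⊗[k] A) (hJ : IsJordanCoalgebra Δ)
    (d : (A →ₗ[k] k) →ₗ[k] (A →ₗ[k] k)) (hd : IsWIntDer Δ d) :
    ∃ D : ((A →ₗ[k] k) × A) →ₗ[k] ((A →ₗ[k] k) × A),
      (∀ x y, D (cmul Δ x y) = cmul Δ (D x) y + cmul Δ x (D y)) ∧
      (∀ f : A →ₗ[k] k, D (f, 0) = (d f, 0)) ∧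
      (∀ a : A, (D (0, a)).1 = 0) ∧
      (∀ B : Submodule k A, IsSubcoalgebra Δ B → ∀ b ∈ B, (D (0, b)).2 ∈ B) ∧
      (∀ (f : A →ₗ[k] k) (a : A), d f a = - f ((D (0, a)).2)) ∧
      (∀ B : Submodule k A, IsSubcoalgebra Δ B → FiniteDimensional k B →
        ∃ j ∈ Submodule.span k {u | ∃ f g : A →ₗ[k] k,
            u = commC Δ ((f, 0) : (A →ₗ[k] k) × A) ((g, 0) : (A →ₗ[k] k) × A)},
          (∀ b ∈ B, D (0, b) = j (0, b)) ∧
          (∀ f : A →ₗ[k] k, ∀ b ∈ B, d f b = (j (f, 0)).1 b)) := by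
  obtain ⟨E, rfl, hEB⟩ := hd.exists_dualMap_eq Δ hJ h2
  refine ⟨E.dualMap.prodMap (-E), prodMap_dualMap_neg_cmul Δ hd.1, fun f => by simp,
    fun a => by simp, fun B hB b hb => by simpa using hEB B hB b hb, fun f a => by simp,
    fun B hB hfd => ?_⟩
  obtain ⟨i, hi, hdi⟩ := hd.2 B hB hfd
  obtain ⟨j, hj, hji⟩ := exists_mem_intDerC Δ hi
  refine ⟨j, hj, fun b hb => ?_, fun f b hb => by rw [hji, hdi f b hb]⟩
  obtain ⟨hj₁, hj₂⟩ := intDerC_apply_inr Δ hj b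
  refine Prod.ext (by simp [hj₁]) (eq_of_forall_dual_apply_eq (k := k) fun f => ?_)
  simp [hj₂, hji, ← hdi f b hb]

/-- **Proposition 2.** Every weakly inner derivation `d` of `A*` extends to a derivation `D`
of the null extension `C = A* ⊕ A` (with `D = d` on `A*`, and `D` mapping `A` to `A`) such that
(i) `BD ⊆ B` for every subcoalgebra `B`; (ii) `⟨fd, a⟩ = -⟨f, aD⟩` for all `f ∈ A*`, `a ∈ A`;
(iii) on every finite-dimensional subcoalgebra `B`, `D` agrees with an inner derivation
`i` of `A*` (acting on `C`), both on `B` and in the sense `⟨fD, b⟩ = ⟨fi, b⟩`. -/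
theorem prop2_extension {k : Type*} [Field k] {A : Type*} [AddCommGroup A] [Module k A]
    (h2 : (2 : k) ≠ 0) (Δ : A →ₗ[k] A ⊗[k] A) (hJ : IsJordanCoalgebra Δ)
    (one : A →ₗ[k] k) (hone : ∀ f, dmul Δ one f = f ∧ dmul Δ f one = f)
    (d : (A →ₗ[k] k) →ₗ[k] (A →ₗ[k] k)) (hd : IsWIntDer Δ d) :
    ∃ D : ((A →ₗ[k] k) × A) →ₗ[k] ((A →ₗ[k] k) × A),
      (∀ x y, D (cmul Δ x y) = cmul Δ (D x) y + cmul Δ x (D y)) ∧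
      (∀ f : A →ₗ[k] k, D (f, 0) = (d f, 0)) ∧
      (∀ a : A, (D (0, a)).1 = 0) ∧
      (∀ B : Submodule k A, IsSubcoalgebra Δ B → ∀ b ∈ B, (D (0, b)).2 ∈ B) ∧
      (∀ (f : A →ₗ[k] k) (a : A), d f a = - f ((D (0, a)).2)) ∧
      (∀ B : Submodule k A, IsSubcoalgebra Δ B → FiniteDimensional k B →
        ∃ j ∈ Submodule.span k {u | ∃ f g : A →ₗ[k] k,
            u = commC Δ ((f, 0) : (A →ₗ[k] k) × A) ((g, 0) : (A →ₗ[k] k) × A)},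
          (∀ b ∈ B, D (0, b) = j (0, b)) ∧
          (∀ f : A →ₗ[k] k, ∀ b ∈ B, d f b = (j (f, 0)).1 b)) :=
  prop2_extension_general h2 Δ hJ d hd
end
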